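/- (Theorem 1 of the paper, with the explicit constant produced by its proof.) Let X be a measurable space, μ a probability measure on X, and P, Q : X → ℝ measurable with P(x) > 0, Q(x) > 0 and max{|log P(x)|, |log Q(x)|} ≤ c for all x ∈ X, where c > 0. Suppose there is a constant κ > 0 such that (Q(x) − P(x))²/max{P(x)², Q(x)²} ≥ κ for all x ∈ X. Let x₁, …, xₙ be i.i.d. with law μ, let α* be a maximizer of the population log-likelihood L over [0,1] with L′(α*) = 0, and let α̂ be a maximizer of the empirical log-likelihood L̂ₙ over [0,1]. Then for every δ ∈ (0,1), with probability at least 1−δ, |α* − α̂| ≤ √(4·√(2c²·log(2/δ)/n)/κ); in particular |α* − α̂| = O(√(log^{1/2}(1/δ)/(n^{1/2}·κ))). -/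

import Mathlib

/-!
For each `y`, the second derivative of `a ↦ log ((1 - a) P y + a Q y)` is
`-(Q y - P y)² / ((1 - a) P y + a Q y)² ≤ -κ` on `[0, 1]`, so the population log-likelihood `L`
is `κ`-strongly concave and its maximiser satisfies `L β ≤ L α* - κ/2 (β - α*)²`.
If `|α̂ - α*| > r`, one of the points `β = α* ± r` lies between `α*` and `α̂`, so
`L̂ₙ β ≥ L̂ₙ α*` by concavity of `L̂ₙ`, while `L β ≤ L α* - κ r²/2`. Thus the sample mean of
`log ((1 - β) P + β Q) - log ((1 - α*) P + α* Q) ∈ [-2c, 2c]` exceeds its expectation by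
`κ r²/2`, an event of probability at most `δ/2` by Hoeffding's inequality for the chosen `r`.
-/

open MeasureTheory ProbabilityTheory Real Set Filter Topology

section StrongConcavity

variable {E : Type*} [NormedAddCommGroup E] [NormedSpace ℝ E] {s : Set E} {m : ℝ} {f : E → ℝ}

lemma StrongConcaveOn.le_sub_of_isMaxOn (hf : StrongConcaveOn s m f) {a b : E} (ha : a ∈ s)
    (hb : b ∈ s) (hmax : IsMaxOn f s a) : f b ≤ f a - m / 2 * ‖b - a‖ ^ 2 := by
  set K := m / 2 * ‖b - a‖ ^ 2 with hK
  have hstep : ∀ t ∈ Ioo (0 : ℝ) 1, f b - f a + (1 - t) * K ≤ 0 := by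
    rintro t ⟨ht0, ht1⟩
    have hconc := hf.2 ha hb (sub_nonneg.2 ht1.le) ht0.le (sub_add_cancel 1 t)
    have hle : f ((1 - t) • a + t • b) ≤ f a :=
      hmax (hf.1 ha hb (sub_nonneg.2 ht1.le) ht0.le (sub_add_cancel 1 t))
    simp only [smul_eq_mul] at hconc
    rw [norm_sub_rev, ← hK] at hconc
    have : t * (f b - f a + (1 - t) * K) ≤ 0 := by linear_combination hconc + hle
    exact nonpos_of_mul_nonpos_right this ht0
  have hlim : Tendsto (fun t : ℝ => f b - f a + (1 - t) * K) (𝓝[>] 0)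
      (𝓝 (f b - f a + (1 - 0) * K)) :=
    (Continuous.tendsto (by fun_prop) _).mono_left nhdsWithin_le_nhds
  have := le_of_tendsto hlim (eventually_of_mem (Ioo_mem_nhdsGT one_pos) hstep)
  linarith

variable {X : Type*} [MeasurableSpace X] {μ : Measure X} [IsProbabilityMeasure μ]

lemma StrongConcaveOn.integral {F : E → X → ℝ} (hF : ∀ y, StrongConcaveOn s m (F · y))
    (hint : ∀ a ∈ s, Integrable (F a) μ) : StrongConcaveOn s m (fun a => ∫ y, F a y ∂μ) := by
  have hs : Convex ℝ s := (hF (nonempty_of_isProbabilityMeasure μ).some).1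
  refine ⟨hs, fun a ha b hb t u ht hu htu => ?_⟩
  have hpt : ∀ y, t * F a y + u * F b y + t * u * (m / 2 * ‖a - b‖ ^ 2) ≤ F (t • a + u • b) y :=
    fun y => (hF y).2 ha hb ht hu htu
  have hta := (hint a ha).const_mul t
  have htb := (hint b hb).const_mul u
  calc t • ∫ y, F a y ∂μ + u • ∫ y, F b y ∂μ + t * u * (m / 2 * ‖a - b‖ ^ 2)
      = ∫ y, (t * F a y + u * F b y + t * u * (m / 2 * ‖a - b‖ ^ 2)) ∂μ := by
        rw [integral_add (f := fun y => t * F a y + u * F b y) (hta.add htb) (integrable_const _),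
          integral_add hta htb, integral_const_mul, integral_const_mul, integral_const]
        simp
    _ ≤ ∫ y, F (t • a + u • b) y ∂μ :=
        integral_mono ((hta.add htb).add (integrable_const _))
          (hint _ (hs ha hb ht hu htu)) hpt

end StrongConcavity

section Mixture

variable {p q : ℝ}

lemma Convex.one_sub_mul_add_mul_mem {s : Set ℝ} (hs : Convex ℝ s) (hp : p ∈ s) (hq : q ∈ s) {a : ℝ}
    (ha : a ∈ Icc (0 : ℝ) 1) : (1 - a) * p + a * q ∈ s :=
  hs hp hq (sub_nonneg.2 ha.2) ha.1 (sub_add_cancel 1 a)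

lemma abs_log_le_iff_mem_Icc {x c : ℝ} (hx : 0 < x) : |log x| ≤ c ↔ x ∈ Icc (exp (-c)) (exp c) := by
  rw [abs_le, neg_le, ← log_inv, log_le_iff_le_exp (inv_pos.2 hx), log_le_iff_le_exp hx,
    mem_Icc, exp_neg, inv_le_comm₀ hx (exp_pos c)]

lemma abs_log_mix_le (hp : 0 < p) (hq : 0 < q) {c : ℝ} (hpc : |log p| ≤ c) (hqc : |log q| ≤ c)
    {a : ℝ} (ha : a ∈ Icc (0 : ℝ) 1) : |log ((1 - a) * p + a * q)| ≤ c := by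
  rw [abs_log_le_iff_mem_Icc ((convex_Ioi 0).one_sub_mul_add_mul_mem hp hq ha)]
  exact (convex_Icc _ _).one_sub_mul_add_mul_mem ((abs_log_le_iff_mem_Icc hp).1 hpc)
    ((abs_log_le_iff_mem_Icc hq).1 hqc) ha

lemma strongConcaveOn_log_mix (hp : 0 < p) (hq : 0 < q) {κ : ℝ}
    (hκ : κ ≤ (q - p) ^ 2 / max (p ^ 2) (q ^ 2)) :
    StrongConcaveOn (Icc 0 1) κ (fun a => log ((1 - a) * p + a * q)) := by
  have hmix : ∀ a ∈ Icc (0 : ℝ) 1, 0 < (1 - a) * p + a * q :=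
    fun a ha => (convex_Ioi 0).one_sub_mul_add_mul_mem hp hq ha
  have hlin : ∀ a : ℝ, HasDerivAt (fun a => (1 - a) * p + a * q) (q - p) a := fun a =>
    (((hasDerivAt_id a).const_sub 1).mul_const p |>.add ((hasDerivAt_id a).mul_const q)).congr_deriv
      (by ring)
  rw [strongConcaveOn_iff_convex]
  simp only [Real.norm_eq_abs, sq_abs]
  refine concaveOn_of_hasDerivWithinAt2_nonpos (convex_Icc 0 1)
    (f' := fun a => (q - p) / ((1 - a) * p + a * q) + κ * a)
    (f'' := fun a => -(q - p) ^ 2 / ((1 - a) * p + a * q) ^ 2 + κ) ?_ ?_ ?_ ?_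
  · exact (ContinuousOn.log (by fun_prop) fun a ha => (hmix a ha).ne').add (by fun_prop)
  · intro a ha
    have hne := (hmix a (interior_subset ha)).ne'
    exact (((hlin a).log hne).add ((hasDerivAt_pow 2 a).const_mul (κ / 2))).hasDerivWithinAt
      |>.congr_deriv (by ring)
  · intro a ha
    have hne := (hmix a (interior_subset ha)).ne'
    exact (((hasDerivAt_const a (q - p)).div (hlin a) hne).add
      ((hasDerivAt_id a).const_mul κ)).hasDerivWithinAt.congr_deriv (by ring)
  · intro a ha
    rw [interior_Icc] at ha
    have hle : ((1 - a) * p + a * q) ^ 2 ≤ max (p ^ 2) (q ^ 2) := by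
      calc ((1 - a) * p + a * q) ^ 2 ≤ (1 - a) * p ^ 2 + a * q ^ 2 := by
            nlinarith [mul_nonneg (mul_nonneg ha.1.le (sub_nonneg.2 ha.2.le)) (sq_nonneg (p - q))]
        _ ≤ max (p ^ 2) (q ^ 2) := (convex_Iic _).one_sub_mul_add_mul_mem
            (mem_Iic.2 (le_max_left _ _)) (mem_Iic.2 (le_max_right _ _)) (Ioo_subset_Icc_self ha)
    have := div_le_div_of_nonneg_left (sq_nonneg (q - p))
      (pow_pos (hmix a (Ioo_subset_Icc_self ha)) 2) hle
    simp only [neg_div]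
    linarith

end Mixture

section Hoeffding

variable {Ω X ι : Type*} [MeasurableSpace Ω] [MeasurableSpace X] [Fintype ι]
  {ν : Measure Ω} [IsProbabilityMeasure ν] {μ : Measure X}

lemma measureReal_le_sum_sub_integral_le {x : ι → Ω → X} (hxm : ∀ i, Measurable (x i))
    (hindep : iIndepFun x ν) (hlaw : ∀ i, ν.map (x i) = μ) {h : X → ℝ} (hm : Measurable h)
    {a b : ℝ} (hab : ∀ y, h y ∈ Icc a b) {t : ℝ} (ht : 0 ≤ t) :
    ν.real {ω | Fintype.card ι * t ≤ ∑ i, (h (x i ω) - ∫ y, h y ∂μ)} ≤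
      exp (-2 * Fintype.card ι * t ^ 2 / (b - a) ^ 2) := by
  have hmean : ∀ i, ∫ ω, h (x i ω) ∂ν = ∫ y, h y ∂μ := fun i => by
    rw [← hlaw i, integral_map (hxm i).aemeasurable hm.aestronglyMeasurable]
  have hsubG : ∀ i, HasSubgaussianMGF (fun ω => h (x i ω) - ∫ y, h y ∂μ)
      ((‖b - a‖₊ / 2) ^ 2) ν := fun i => by
    rw [← hmean i]
    exact hasSubgaussianMGF_of_mem_Icc (hm.comp (hxm i)).aemeasurable (ae_of_all _ fun ω => hab _)
  have hindep' : iIndepFun (fun i ω => h (x i ω) - ∫ y, h y ∂μ) ν :=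
    hindep.comp (fun _ y => h y - ∫ y, h y ∂μ) fun _ => hm.sub_const _
  refine (HasSubgaussianMGF.measure_sum_ge_le_of_iIndepFun hindep' (s := Finset.univ)
    (fun i _ => hsubG i) (by positivity)).trans_eq ?_
  congr 1
  rcases eq_or_ne (Fintype.card ι : ℝ) 0 with hn | hn
  · simp [hn]
  simp only [Finset.sum_const, Finset.card_univ, nsmul_eq_mul, NNReal.coe_mul, NNReal.coe_natCast,
    NNReal.coe_pow, NNReal.coe_div, coe_nnnorm, Real.norm_eq_abs, NNReal.coe_ofNat]
  rw [div_pow, sq_abs]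
  field_simp

end Hoeffding

lemma concaveOn_sum {E ι : Type*} [AddCommGroup E] [Module ℝ E] {s : Set E} (hs : Convex ℝ s)
    {t : Finset ι} {f : ι → E → ℝ} (hf : ∀ i ∈ t, ConcaveOn ℝ s (f i)) :
    ConcaveOn ℝ s (fun a => ∑ i ∈ t, f i a) := by
  induction t using Finset.cons_induction with
  | empty => simpa using concaveOn_const 0 hs
  | cons i t hi ih =>
    simp only [Finset.sum_cons]
    exact (hf i (Finset.mem_cons_self i t)).add (ih fun j hj => hf j (Finset.mem_cons_of_mem hj))

lemma add_mem_segment_or_sub_mem_segment {a b r : ℝ} (hr : 0 ≤ r) (h : r ≤ |b - a|) :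
    a + r ∈ segment ℝ a b ∨ a - r ∈ segment ℝ a b := by
  rw [segment_eq_uIcc]
  rcases le_total a b with hab | hab
  · rw [abs_of_nonneg (sub_nonneg.2 hab)] at h
    exact Or.inl (Icc_subset_uIcc ⟨by linarith, by linarith⟩)
  · rw [abs_of_nonpos (sub_nonpos.2 hab)] at h
    exact Or.inr (Icc_subset_uIcc' ⟨by linarith, by linarith⟩)

lemma sum_log_mix_le_of_mem_segment {ι : Type*} [Fintype ι] {p q : ι → ℝ} (hp : ∀ i, 0 < p i)
    (hq : ∀ i, 0 < q i) {a b z : ℝ} (ha : a ∈ Icc (0 : ℝ) 1) (hb : b ∈ Icc (0 : ℝ) 1)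
    (hab : ∑ i, log ((1 - a) * p i + a * q i) ≤ ∑ i, log ((1 - b) * p i + b * q i))
    (hz : z ∈ segment ℝ a b) :
    ∑ i, log ((1 - a) * p i + a * q i) ≤ ∑ i, log ((1 - z) * p i + z * q i) := by
  have hconc : ConcaveOn ℝ (Icc 0 1) fun a => ∑ i, log ((1 - a) * p i + a * q i) :=
    concaveOn_sum (convex_Icc 0 1) fun i _ =>
      strongConcaveOn_zero.1 (strongConcaveOn_log_mix (hp i) (hq i) (by positivity))
  simpa only [min_eq_left hab] using hconc.min_le_of_mem_segment ha hb hz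

section LogLikelihood

variable {X : Type*} [MeasurableSpace X] {μ : Measure X} {P Q : X → ℝ} {c : ℝ}

lemma integrable_log_mix [IsFiniteMeasure μ] (hPm : Measurable P) (hQm : Measurable Q)
    (hP : ∀ y, 0 < P y) (hQ : ∀ y, 0 < Q y) (hbound : ∀ y, max |log (P y)| |log (Q y)| ≤ c)
    {a : ℝ} (ha : a ∈ Icc (0 : ℝ) 1) : Integrable (fun y => log ((1 - a) * P y + a * Q y)) μ :=
  Integrable.of_mem_Icc (-c) c (by fun_prop) <| ae_of_all _ fun y =>
    abs_le.1 <| abs_log_mix_le (hP y) (hQ y) (max_le_iff.1 (hbound y)).1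
      (max_le_iff.1 (hbound y)).2 ha

lemma integral_log_mix_le_sub_sq [IsProbabilityMeasure μ] (hPm : Measurable P)
    (hQm : Measurable Q) (hP : ∀ y, 0 < P y) (hQ : ∀ y, 0 < Q y)
    (hbound : ∀ y, max |log (P y)| |log (Q y)| ≤ c) {κ : ℝ}
    (hsep : ∀ y, κ ≤ (Q y - P y) ^ 2 / max (P y ^ 2) (Q y ^ 2)) {α β : ℝ}
    (hα : α ∈ Icc (0 : ℝ) 1) (hβ : β ∈ Icc (0 : ℝ) 1)
    (hmax : ∀ β ∈ Icc (0 : ℝ) 1,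
      ∫ y, log ((1 - β) * P y + β * Q y) ∂μ ≤ ∫ y, log ((1 - α) * P y + α * Q y) ∂μ) :
    ∫ y, log ((1 - β) * P y + β * Q y) ∂μ ≤
      ∫ y, log ((1 - α) * P y + α * Q y) ∂μ - κ / 2 * (β - α) ^ 2 := by
  simpa only [Real.norm_eq_abs, sq_abs] using
    (StrongConcaveOn.integral (fun y => strongConcaveOn_log_mix (hP y) (hQ y) (hsep y))
      (fun a ha => integrable_log_mix hPm hQm hP hQ hbound ha)).le_sub_of_isMaxOn hα hβ
      (isMaxOn_iff.2 hmax)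

variable {Ω ι : Type*} [MeasurableSpace Ω] [Fintype ι] {ν : Measure Ω} [IsProbabilityMeasure ν]

lemma measureReal_sum_log_mix_le_sum_log_mix_le [IsProbabilityMeasure μ]
    (hPm : Measurable P) (hQm : Measurable Q) (hP : ∀ y, 0 < P y) (hQ : ∀ y, 0 < Q y)
    (hbound : ∀ y, max |log (P y)| |log (Q y)| ≤ c) {x : ι → Ω → X}
    (hxm : ∀ i, Measurable (x i)) (hindep : iIndepFun x ν) (hlaw : ∀ i, ν.map (x i) = μ)
    {α β s : ℝ} (hα : α ∈ Icc (0 : ℝ) 1) (hβ : β ∈ Icc (0 : ℝ) 1) (hs : 0 ≤ s)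
    (hgap : ∫ y, log ((1 - β) * P y + β * Q y) ∂μ ≤
      ∫ y, log ((1 - α) * P y + α * Q y) ∂μ - s) :
    ν.real {ω | ∑ i, log ((1 - α) * P (x i ω) + α * Q (x i ω)) ≤
        ∑ i, log ((1 - β) * P (x i ω) + β * Q (x i ω))} ≤
      exp (-Fintype.card ι * s ^ 2 / (8 * c ^ 2)) := by
  set h : X → ℝ := fun y => log ((1 - β) * P y + β * Q y) - log ((1 - α) * P y + α * Q y)
  have hmean : ∫ y, h y ∂μ ≤ -s := by
    rw [integral_sub (integrable_log_mix hPm hQm hP hQ hbound hβ)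
      (integrable_log_mix hPm hQm hP hQ hbound hα)]
    linarith
  have hrange : ∀ y, h y ∈ Icc (-(2 * c)) (2 * c) := fun y => by
    have hb := max_le_iff.1 (hbound y)
    have hβc := abs_le.1 (abs_log_mix_le (hP y) (hQ y) hb.1 hb.2 hβ)
    have hαc := abs_le.1 (abs_log_mix_le (hP y) (hQ y) hb.1 hb.2 hα)
    constructor <;> linarith [hβc.1, hβc.2, hαc.1, hαc.2]
  have hsub : {ω | ∑ i, log ((1 - α) * P (x i ω) + α * Q (x i ω)) ≤
      ∑ i, log ((1 - β) * P (x i ω) + β * Q (x i ω))} ⊆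
      {ω | Fintype.card ι * s ≤ ∑ i, (h (x i ω) - ∫ y, h y ∂μ)} := fun ω hω => by
    simp only [mem_ofPred_eq, h, Finset.sum_sub_distrib, Finset.sum_const, Finset.card_univ,
      nsmul_eq_mul] at hω ⊢
    nlinarith [mul_le_mul_of_nonneg_left hmean (Nat.cast_nonneg (Fintype.card ι) : (0 : ℝ) ≤ _)]
  refine (measureReal_mono hsub).trans <|
    (measureReal_le_sum_sub_integral_le hxm hindep hlaw (by fun_prop) hrange hs).trans_eq ?_
  congr 1
  ring

lemma measureReal_lt_abs_sub_le [IsProbabilityMeasure μ]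
    (hPm : Measurable P) (hQm : Measurable Q) (hP : ∀ y, 0 < P y) (hQ : ∀ y, 0 < Q y)
    (hbound : ∀ y, max |log (P y)| |log (Q y)| ≤ c) {κ : ℝ} (hκ : 0 ≤ κ)
    (hsep : ∀ y, κ ≤ (Q y - P y) ^ 2 / max (P y ^ 2) (Q y ^ 2)) {x : ι → Ω → X}
    (hxm : ∀ i, Measurable (x i)) (hindep : iIndepFun x ν) (hlaw : ∀ i, ν.map (x i) = μ)
    {α : ℝ} (hα : α ∈ Icc (0 : ℝ) 1)
    (hαmax : ∀ β ∈ Icc (0 : ℝ) 1,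
      ∫ y, log ((1 - β) * P y + β * Q y) ∂μ ≤ ∫ y, log ((1 - α) * P y + α * Q y) ∂μ)
    {α' : Ω → ℝ} (hα' : ∀ ω, α' ω ∈ Icc (0 : ℝ) 1)
    (hα'max : ∀ ω, ∀ β ∈ Icc (0 : ℝ) 1, ∑ i, log ((1 - β) * P (x i ω) + β * Q (x i ω)) ≤
      ∑ i, log ((1 - α' ω) * P (x i ω) + α' ω * Q (x i ω)))
    {r : ℝ} (hr : 0 ≤ r) :
    ν.real {ω | r < |α - α' ω|} ≤
      2 * exp (-Fintype.card ι * (κ / 2 * r ^ 2) ^ 2 / (8 * c ^ 2)) := by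
  set E : ℝ → Set Ω := fun β => {ω | β ∈ Icc (0 : ℝ) 1 ∧
    ∑ i, log ((1 - α) * P (x i ω) + α * Q (x i ω)) ≤
      ∑ i, log ((1 - β) * P (x i ω) + β * Q (x i ω))}
  have hE : ∀ β, (β - α) ^ 2 = r ^ 2 →
      ν.real (E β) ≤ exp (-Fintype.card ι * (κ / 2 * r ^ 2) ^ 2 / (8 * c ^ 2)) := by
    intro β hβr
    by_cases hβ : β ∈ Icc (0 : ℝ) 1
    · have hgap := integral_log_mix_le_sub_sq hPm hQm hP hQ hbound hsep hα hβ hαmax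
      rw [hβr] at hgap
      exact (measureReal_mono fun ω hω => hω.2).trans <|
        measureReal_sum_log_mix_le_sum_log_mix_le hPm hQm hP hQ hbound hxm hindep hlaw hα hβ
          (by positivity) hgap
    · rw [show E β = ∅ from eq_empty_of_forall_notMem fun ω hω => hβ hω.1, measureReal_empty]
      positivity
  have hcover : {ω | r < |α - α' ω|} ⊆ E (α + r) ∪ E (α - r) := fun ω hω => by
    have hmem : ∀ β ∈ segment ℝ α (α' ω), ω ∈ E β := fun β hβ =>
      ⟨(convex_Icc 0 1).segment_subset hα (hα' ω) hβ,
        sum_log_mix_le_of_mem_segment (fun i => hP _) (fun i => hQ _) hα (hα' ω)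
          (hα'max ω α hα) hβ⟩
    rw [mem_ofPred_eq, abs_sub_comm] at hω
    exact (add_mem_segment_or_sub_mem_segment hr hω.le).imp (hmem _) (hmem _)
  calc ν.real {ω | r < |α - α' ω|} ≤ ν.real (E (α + r)) + ν.real (E (α - r)) :=
        (measureReal_mono hcover).trans (measureReal_union_le _ _)
    _ ≤ _ := by linarith [hE (α + r) (by ring), hE (α - r) (by ring)]

end LogLikelihood

theorem mle_estimation_error_general
    {X : Type*} [MeasurableSpace X] (μ : Measure X) [IsProbabilityMeasure μ]
    (P Q : X → ℝ) (hPm : Measurable P) (hQm : Measurable Q)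
    (hP : ∀ x, 0 < P x) (hQ : ∀ x, 0 < Q x)
    (c : ℝ) (hc : 0 < c)
    (hbound : ∀ x, max |Real.log (P x)| |Real.log (Q x)| ≤ c)
    (κ : ℝ) (hκ : 0 < κ)
    (hsep : ∀ x, (Q x - P x) ^ 2 / max (P x ^ 2) (Q x ^ 2) ≥ κ)
    {Ω : Type*} [MeasureSpace Ω] [IsProbabilityMeasure (ℙ : Measure Ω)]
    (n : ℕ) (hn : 0 < n) (x : Fin n → Ω → X)
    (hxm : ∀ i, Measurable (x i))
    (hindep : iIndepFun x ℙ)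
    (hlaw : ∀ i, Measure.map (x i) ℙ = μ)
    (αstar : ℝ) (hαstar : αstar ∈ Set.Icc (0 : ℝ) 1)
    (hαstarMax : ∀ β ∈ Set.Icc (0 : ℝ) 1,
      (∫ y, Real.log ((1 - β) * P y + β * Q y) ∂μ) ≤
        ∫ y, Real.log ((1 - αstar) * P y + αstar * Q y) ∂μ)
    (αhat : Ω → ℝ) (hαhat : ∀ ω, αhat ω ∈ Set.Icc (0 : ℝ) 1)
    (hαhatMax : ∀ ω, ∀ β ∈ Set.Icc (0 : ℝ) 1,
      (1 / (n : ℝ)) * ∑ i, Real.log ((1 - β) * P (x i ω) + β * Q (x i ω)) ≤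
        (1 / (n : ℝ)) *
          ∑ i, Real.log ((1 - αhat ω) * P (x i ω) + αhat ω * Q (x i ω)))
    (δ : ℝ) (hδ : δ ∈ Set.Ioo (0 : ℝ) 1) :
    (ℙ {ω : Ω |
        |αstar - αhat ω| ≤
          Real.sqrt (4 * Real.sqrt (2 * c ^ 2 * Real.log (2 / δ) / (n : ℝ)) / κ)}).toReal
      ≥ 1 - δ := by
  obtain ⟨hδ0, hδ1⟩ := hδ
  set ε := √(2 * c ^ 2 * log (2 / δ) / n)
  set r := √(4 * ε / κ)
  have hlog : 0 < log (2 / δ) := log_pos (by rw [lt_div_iff₀ hδ0]; linarith)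
  have hbad := measureReal_lt_abs_sub_le hPm hQm hP hQ hbound hκ.le hsep hxm hindep hlaw hαstar
    hαstarMax hαhat (fun ω β hβ => le_of_mul_le_mul_left (hαhatMax ω β hβ) (by positivity))
    (sqrt_nonneg (4 * ε / κ))
  have hκr : κ / 2 * r ^ 2 = 2 * ε := by
    rw [sq_sqrt (by positivity)]
    field_simp
    ring
  have hexp : exp (-n * (2 * ε) ^ 2 / (8 * c ^ 2)) = δ / 2 := by
    rw [mul_pow, sq_sqrt (by positivity), show -(n : ℝ) * (2 ^ 2 * (2 * c ^ 2 * log (2 / δ) / n))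
      / (8 * c ^ 2) = -log (2 / δ) by field_simp; ring, exp_neg, exp_log (by positivity), inv_div]
  rw [Fintype.card_fin, hκr, hexp] at hbad
  have hsplit : univ ⊆ {ω | |αstar - αhat ω| ≤ r} ∪ {ω | r < |αstar - αhat ω|} :=
    fun ω _ => le_or_gt |αstar - αhat ω| r
  have hprob := (measureReal_mono (μ := (ℙ : Measure Ω)) hsplit).trans (measureReal_union_le _ _)
  rw [probReal_univ] at hprob
  change 1 - δ ≤ (ℙ : Measure Ω).real _
  linarith

/-- Theorem 1 of the paper (with the explicit constant from its proof): under the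
separation condition `(Q(x) - P(x))²/max{P(x)², Q(x)²} ≥ κ` and boundedness of the
log-likelihoods, the empirical MLE `α̂` is close to the population maximizer `α*`
with high probability. -/
theorem mle_estimation_error
    {X : Type*} [MeasurableSpace X] (μ : Measure X) [IsProbabilityMeasure μ]
    (P Q : X → ℝ) (hPm : Measurable P) (hQm : Measurable Q)
    (hP : ∀ x, 0 < P x) (hQ : ∀ x, 0 < Q x)
    (c : ℝ) (hc : 0 < c)
    (hbound : ∀ x, max |Real.log (P x)| |Real.log (Q x)| ≤ c)
    (κ : ℝ) (hκ : 0 < κ)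
    (hsep : ∀ x, (Q x - P x) ^ 2 / max (P x ^ 2) (Q x ^ 2) ≥ κ)
    {Ω : Type*} [MeasureSpace Ω] [IsProbabilityMeasure (ℙ : Measure Ω)]
    (n : ℕ) (hn : 0 < n) (x : Fin n → Ω → X)
    (hxm : ∀ i, Measurable (x i))
    (hindep : iIndepFun x ℙ)
    (hlaw : ∀ i, Measure.map (x i) ℙ = μ)
    (αstar : ℝ) (hαstar : αstar ∈ Set.Icc (0 : ℝ) 1)
    (hαstarMax : ∀ β ∈ Set.Icc (0 : ℝ) 1,
      (∫ y, Real.log ((1 - β) * P y + β * Q y) ∂μ) ≤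
        ∫ y, Real.log ((1 - αstar) * P y + αstar * Q y) ∂μ)
    (hstat : deriv (fun a : ℝ => ∫ y, Real.log ((1 - a) * P y + a * Q y) ∂μ) αstar = 0)
    (αhat : Ω → ℝ) (hαhat : ∀ ω, αhat ω ∈ Set.Icc (0 : ℝ) 1)
    (hαhatMax : ∀ ω, ∀ β ∈ Set.Icc (0 : ℝ) 1,
      (1 / (n : ℝ)) * ∑ i, Real.log ((1 - β) * P (x i ω) + β * Q (x i ω)) ≤
        (1 / (n : ℝ)) *
          ∑ i, Real.log ((1 - αhat ω) * P (x i ω) + αhat ω * Q (x i ω)))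
    (δ : ℝ) (hδ : δ ∈ Set.Ioo (0 : ℝ) 1) :
    (ℙ {ω : Ω |
        |αstar - αhat ω| ≤
          Real.sqrt (4 * Real.sqrt (2 * c ^ 2 * Real.log (2 / δ) / (n : ℝ)) / κ)}).toReal
      ≥ 1 - δ :=
  mle_estimation_error_general μ P Q hPm hQm hP hQ c hc hbound κ hκ hsep n hn x hxm hindep hlaw
    αstar hαstar hαstarMax αhat hαhat hαhatMax δ hδ
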